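/- If F is a graph with no isolated vertices that is neither a complete graph nor a complete multipartite graph, then cex(n,F) = Ω(n^{3/2}); that is, there exist a constant c > 0 and N such that cex(n,F) ≥ c·n^{3/2} for all n ≥ N. -/

import Mathlib

open SimpleGraph Finset

/-- A decomposition of `G` into pairwise edge-disjoint (not necessarily induced) copies of `F`
covering all edges of `G`: every edge of `G` lies in the edge set of exactly one copy. -/
def HasDecompositionInto {α β : Type} (F : SimpleGraph α) (G : SimpleGraph β) : Prop :=
  ∃ (ι : Type) (c : ι → α → β),
    (∀ t, Function.Injective (c t)) ∧
    (∀ t u v, F.Adj u v → G.Adj (c t u) (c t v)) ∧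
    ∀ e ∈ G.edgeSet, ∃! t : ι, ∃ u v, F.Adj u v ∧ e = s(c t u, c t v)

/-- A decomposition of `G` into pairwise edge-disjoint *induced* copies of `F`
covering all edges of `G`. -/
def HasInducedDecompositionInto {α β : Type} (F : SimpleGraph α) (G : SimpleGraph β) : Prop :=
  ∃ (ι : Type) (c : ι → α → β),
    (∀ t, Function.Injective (c t)) ∧
    (∀ t u v, F.Adj u v ↔ G.Adj (c t u) (c t v)) ∧
    ∀ e ∈ G.edgeSet, ∃! t : ι, ∃ u v, F.Adj u v ∧ e = s(c t u, c t v)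

/-- `ex(n,F)`: the maximum number of edges of a graph on `n` vertices admitting
an induced `F`-decomposition. -/
noncomputable def exInd {α : Type} (F : SimpleGraph α) (n : ℕ) : ℕ :=
  sSup {m | ∃ G : SimpleGraph (Fin n), HasInducedDecompositionInto F G ∧ G.edgeSet.ncard = m}

/-- `cex(n,F) = C(n,2) - ex(n,F)`. -/
noncomputable def cex {α : Type} (F : SimpleGraph α) (n : ℕ) : ℕ :=
  n.choose 2 - exInd F n

/-!
Since `F` is not complete multipartite, it has a vertex `z` adjacent to neither end of an edge
`ab`, and `z` has a neighbour `w`. Let `G` on `n` vertices have an induced `F`-decomposition and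
fix a vertex `x` of `G`. Distinct copies placing `z` at `x` use distinct edges of `G` at `x` (their
images of `zw`), and distinct pairs of non-neighbours of `x` (their images of `a, b`, by
inducedness). So at most `min(n, d(x)²) ≤ (√n + 1) d(x)` copies place `z` at `x`, where `d` is the
degree in `Gᶜ`. Summing over `x`, `G` has `O(√n · e(Gᶜ))` copies of `F`, hence `O(√n · e(Gᶜ))`
edges, and `e(G) + e(Gᶜ) = n(n - 1)/2` forces `e(Gᶜ) = Ω(n^{3/2})`.
-/

namespace SimpleGraph

def Iso.completeMultipartiteGraph {ι ι' : Type*} {V : ι → Type*} {W : ι' → Type*} (e : ι ≃ ι')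
    (f : ∀ i, V i ≃ W (e i)) : completeMultipartiteGraph V ≃g completeMultipartiteGraph W where
  toEquiv := e.sigmaCongr f
  map_rel_iff' := by simp [Equiv.sigmaCongr]

theorem IsCompleteMultipartite.exists_iso_fin {V : Type} [Finite V] {F : SimpleGraph V}
    (h : F.IsCompleteMultipartite) :
    ∃ (k : ℕ) (a : Fin k → ℕ),
      Nonempty (F ≃g completeMultipartiteGraph fun i : Fin k => Fin (a i)) :=
  ⟨_, _, ⟨h.iso.trans (Iso.completeMultipartiteGraph (Finite.equivFin _).symm
    fun _ => (Finite.equivFin _).symm).symm⟩⟩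

theorem card_edgeFinset_compl {V : Type} [Fintype V] [DecidableEq V] (G : SimpleGraph V)
    [DecidableRel G.Adj] : #Gᶜ.edgeFinset = (Fintype.card V).choose 2 - #G.edgeFinset := by
  rw [← card_edgeFinset_top_eq_card_choose_two, ← card_sdiff_of_subset (edgeFinset_mono le_top)]
  congr 1
  ext e
  induction e with
  | h x y => simp

theorem ncard_edgeSet {V : Type} [Fintype V] (G : SimpleGraph V) [DecidableRel G.Adj] :
    G.edgeSet.ncard = #G.edgeFinset := by
  rw [← coe_edgeFinset, Set.ncard_coe_finset]

end SimpleGraph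

theorem Nat.le_sqrt_add_one_mul_of_le_of_le_sq {m n d : ℕ} (hmn : m ≤ n) (hmd : m ≤ d ^ 2) :
    m ≤ (Nat.sqrt n + 1) * d := by
  rcases le_or_gt (Nat.sqrt n + 1) d with h | h
  · calc m ≤ n := hmn
      _ ≤ (Nat.sqrt n + 1) * (Nat.sqrt n + 1) := (Nat.lt_succ_sqrt n).le
      _ ≤ (Nat.sqrt n + 1) * d := Nat.mul_le_mul_left _ h
  · calc m ≤ d * d := by rwa [sq] at hmd
      _ ≤ (Nat.sqrt n + 1) * d := Nat.mul_le_mul_right _ h.le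

structure IsEdgeDecomposition {α β ι : Type} (F : SimpleGraph α) (G : SimpleGraph β)
    (c : ι → α → β) : Prop where
  adj : ∀ t u v, F.Adj u v → G.Adj (c t u) (c t v)
  existsUnique : ∀ e ∈ G.edgeSet, ∃! t, ∃ u v, F.Adj u v ∧ e = s(c t u, c t v)

namespace IsEdgeDecomposition

variable {α β ι : Type} {F : SimpleGraph α} {G : SimpleGraph β} {c : ι → α → β}

theorem eq_of_edge_eq (hc : IsEdgeDecomposition F G c) {t t' : ι} {u v u' v' : α}
    (huv : F.Adj u v) (hu'v' : F.Adj u' v') (h : s(c t u, c t v) = s(c t' u', c t' v')) :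
    t = t' :=
  (hc.existsUnique _ (hc.adj t u v huv)).unique ⟨u, v, huv, rfl⟩ ⟨u', v', hu'v', h⟩

theorem finite_index [Finite β] (hc : IsEdgeDecomposition F G c) {a b : α} (hab : F.Adj a b) :
    Finite ι :=
  .of_injective (fun t => s(c t a, c t b)) fun _ _ h => hc.eq_of_edge_eq hab hab h

theorem card_edgeFinset_le [Fintype ι] [Fintype α] [Fintype β] [DecidableRel F.Adj]
    [DecidableRel G.Adj] (hc : IsEdgeDecomposition F G c) :
    #G.edgeFinset ≤ Fintype.card ι * #F.edgeFinset := by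
  classical
  calc #G.edgeFinset
      ≤ #((univ ×ˢ F.edgeFinset).image fun p : ι × Sym2 α => p.2.map (c p.1)) := by
        refine card_le_card fun e he => ?_
        obtain ⟨t, ⟨u, v, huv, rfl⟩, -⟩ := hc.existsUnique e (mem_edgeFinset.1 he)
        exact mem_image.2 ⟨(t, s(u, v)), by simpa using huv, rfl⟩
    _ ≤ #(univ ×ˢ F.edgeFinset) := card_image_le
    _ = Fintype.card ι * #F.edgeFinset := by rw [card_product, card_univ]

variable [Fintype ι] [Fintype β] [DecidableEq β] [DecidableRel G.Adj]

theorem card_filter_le_degree (hc : IsEdgeDecomposition F G c) {z w : α} (hzw : F.Adj z w)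
    (x : β) : #{t | c t z = x} ≤ G.degree x := by
  rw [← card_incidenceFinset_eq_degree]
  refine card_le_card_of_injOn (fun t => s(c t z, c t w)) (fun t ht => ?_)
    fun t _ t' _ h => hc.eq_of_edge_eq hzw hzw h
  rw [mem_coe, mem_filter] at ht
  rw [mem_coe, mem_incidenceFinset, ← ht.2]
  exact ⟨hc.adj t z w hzw, Sym2.mem_mk_left _ _⟩

theorem card_filter_le_compl_degree_sq (hc : IsEdgeDecomposition F G c)
    (hinj : ∀ t, Function.Injective (c t)) (hind : ∀ t u v, G.Adj (c t u) (c t v) → F.Adj u v)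
    {z a b : α} (hzab : F.IsPathGraph3Compl z a b) (x : β) :
    #{t | c t z = x} ≤ Gᶜ.degree x ^ 2 := by
  have hcompl : ∀ t, c t z = x → ∀ y, ¬F.Adj z y → z ≠ y → c t y ∈ Gᶜ.neighborFinset x := by
    rintro t rfl y hzy hne
    rw [mem_neighborFinset, compl_adj]
    exact ⟨(hinj t).ne hne, fun h => hzy (hind t z y h)⟩
  rw [sq, ← card_neighborFinset_eq_degree, ← card_product]
  refine card_le_card_of_injOn (fun t => (c t a, c t b)) ?_ ?_
  · intro t ht
    rw [mem_coe, mem_filter] at ht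
    exact mem_product.2 ⟨hcompl t ht.2 a hzab.not_adj_fst hzab.ne_fst,
      hcompl t ht.2 b hzab.not_adj_snd hzab.ne_snd⟩
  · intro t _ t' _ h
    simp only [Prod.mk.injEq] at h
    exact hc.eq_of_edge_eq hzab.adj hzab.adj (by rw [h.1, h.2])

theorem card_index_le (hc : IsEdgeDecomposition F G c)
    (hinj : ∀ t, Function.Injective (c t)) (hind : ∀ t u v, G.Adj (c t u) (c t v) → F.Adj u v)
    {z a b w : α} (hzab : F.IsPathGraph3Compl z a b) (hzw : F.Adj z w) :
    Fintype.card ι ≤ (Nat.sqrt (Fintype.card β) + 1) * (2 * #Gᶜ.edgeFinset) := by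
  have hfiber : ∀ x, #{t | c t z = x} ≤ (Nat.sqrt (Fintype.card β) + 1) * Gᶜ.degree x :=
    fun x => Nat.le_sqrt_add_one_mul_of_le_of_le_sq
      ((hc.card_filter_le_degree hzw x).trans (G.degree_lt_card_verts x).le)
      (hc.card_filter_le_compl_degree_sq hinj hind hzab x)
  calc Fintype.card ι = ∑ x, #{t | c t z = x} := by
        rw [← card_univ]; exact card_eq_sum_card_fiberwise fun _ _ => mem_univ _
    _ ≤ ∑ x, (Nat.sqrt (Fintype.card β) + 1) * Gᶜ.degree x := sum_le_sum fun x _ => hfiber x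
    _ = (Nat.sqrt (Fintype.card β) + 1) * (2 * #Gᶜ.edgeFinset) := by
        rw [← mul_sum, sum_degrees_eq_twice_card_edges]

end IsEdgeDecomposition

theorem hasInducedDecompositionInto_bot {α β : Type} (F : SimpleGraph α) :
    HasInducedDecompositionInto F (⊥ : SimpleGraph β) :=
  ⟨Empty, Empty.elim, fun t => t.elim, fun t => t.elim, fun _ he => by simp at he⟩

theorem exists_hasInducedDecompositionInto_ncard_eq_exInd {α : Type} (F : SimpleGraph α) (n : ℕ) :
    ∃ G : SimpleGraph (Fin n), HasInducedDecompositionInto F G ∧ G.edgeSet.ncard = exInd F n := by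
  classical
  show exInd F n ∈
    {m | ∃ G : SimpleGraph (Fin n), HasInducedDecompositionInto F G ∧ G.edgeSet.ncard = m}
  refine Nat.sSup_mem ⟨0, ⊥, hasInducedDecompositionInto_bot F, by simp⟩ ⟨n.choose 2, ?_⟩
  rintro m ⟨G, -, rfl⟩
  simpa [G.ncard_edgeSet] using G.card_edgeFinset_le_card_choose_two

theorem exists_hasInducedDecompositionInto_cex_eq {α : Type} (F : SimpleGraph α) (n : ℕ) :
    ∃ G : SimpleGraph (Fin n), HasInducedDecompositionInto F G ∧ cex F n = Gᶜ.edgeSet.ncard := by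
  classical
  obtain ⟨G, hG, hcard⟩ := exists_hasInducedDecompositionInto_ncard_eq_exInd F n
  refine ⟨G, hG, ?_⟩
  rw [cex, ← hcard, ncard_edgeSet, ncard_edgeSet, card_edgeFinset_compl, Fintype.card_fin]

theorem HasInducedDecompositionInto.choose_two_le {α β : Type} [Finite α] [Fintype β]
    {F : SimpleGraph α} {G : SimpleGraph β} (hG : HasInducedDecompositionInto F G)
    {z a b w : α} (hzab : F.IsPathGraph3Compl z a b) (hzw : F.Adj z w) :
    (Fintype.card β).choose 2 ≤
      (2 * (Nat.sqrt (Fintype.card β) + 1) * F.edgeSet.ncard + 1) * Gᶜ.edgeSet.ncard := by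
  classical
  have := Fintype.ofFinite α
  obtain ⟨ι, c, hinj, hadj, huniq⟩ := hG
  have hc : IsEdgeDecomposition F G c := ⟨fun t u v => (hadj t u v).1, huniq⟩
  have := hc.finite_index hzab.adj
  have := Fintype.ofFinite ι
  have hT := hc.card_index_le hinj (fun t u v => (hadj t u v).2) hzab hzw
  have hGc := G.card_edgeFinset_compl
  rw [ncard_edgeSet, ncard_edgeSet]
  set s := Nat.sqrt (Fintype.card β)
  calc (Fintype.card β).choose 2 ≤ #G.edgeFinset + #Gᶜ.edgeFinset := by omega
    _ ≤ (s + 1) * (2 * #Gᶜ.edgeFinset) * #F.edgeFinset + #Gᶜ.edgeFinset := by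
        gcongr
        exact hc.card_edgeFinset_le.trans (Nat.mul_le_mul_right _ hT)
    _ = (2 * (s + 1) * #F.edgeFinset + 1) * #Gᶜ.edgeFinset := by ring

theorem rpow_three_halves_le_of_choose_two_le {n K d : ℕ} (hn : 2 ≤ n) (hK : 1 ≤ K)
    (h : n.choose 2 ≤ (2 * (Nat.sqrt n + 1) * K + 1) * d) :
    (n : ℝ) ^ (3 / 2 : ℝ) ≤ 20 * K * d := by
  have hn' : (2 : ℝ) ≤ n := by exact_mod_cast hn
  have hK' : (1 : ℝ) ≤ K := by exact_mod_cast hK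
  have hd : (0 : ℝ) ≤ d := d.cast_nonneg
  have hsqrt : (Nat.sqrt n : ℝ) ≤ √n := Real.nat_sqrt_le_real_sqrt
  have hone : 1 ≤ √(n : ℝ) := Real.one_le_sqrt.2 (by linarith)
  have hsq : √(n : ℝ) * √(n : ℝ) = n := Real.mul_self_sqrt (by linarith)
  have hpow : (n : ℝ) ^ (3 / 2 : ℝ) = n * √n := by
    rw [Real.sqrt_eq_rpow, ← Real.rpow_one_add' (by linarith) (by norm_num)]
    norm_num
  have hchoose : (n : ℝ) * (n - 1) / 2 ≤ (2 * (Nat.sqrt n + 1) * K + 1) * d := by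
    rw [← Nat.cast_choose_two]; exact_mod_cast h
  have hfactor : 2 * ((Nat.sqrt n : ℝ) + 1) * K + 1 ≤ 5 * K * √n := by nlinarith
  have hsquare : (n * √n) * √n ≤ (20 * K * d) * √n := by
    nlinarith [mul_le_mul_of_nonneg_right hfactor hd]
  rw [hpow]
  exact le_of_mul_le_mul_right hsquare (by linarith)

theorem cex_omega_three_halves_general {V : Type} [Fintype V] (F : SimpleGraph V)
    (hiso : ∀ v : V, ∃ u : V, F.Adj v u)
    (hncm : ¬ ∃ (k : ℕ) (a : Fin k → ℕ),
        Nonempty (F ≃g completeMultipartiteGraph fun i : Fin k => Fin (a i))) :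
    ∃ c : ℝ, 0 < c ∧ ∃ N : ℕ, ∀ n : ℕ, N ≤ n →
      c * (n : ℝ) ^ (3 / 2 : ℝ) ≤ (cex F n : ℝ) := by
  obtain ⟨z, a, b, hzab⟩ := exists_isPathGraph3Compl_of_not_isCompleteMultipartite
    (mt IsCompleteMultipartite.exists_iso_fin hncm)
  obtain ⟨w, hzw⟩ := hiso z
  have hF : 1 ≤ F.edgeSet.ncard :=
    (Set.ncard_pos (Set.toFinite _)).2 ⟨s(a, b), hzab.adj⟩
  refine ⟨1 / (20 * F.edgeSet.ncard), by positivity, 2, fun n hn => ?_⟩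
  obtain ⟨G, hG, hcex⟩ := exists_hasInducedDecompositionInto_cex_eq F n
  have hbound := hG.choose_two_le hzab hzw
  rw [Fintype.card_fin, ← hcex] at hbound
  rw [div_mul_eq_mul_div, one_mul, div_le_iff₀ (by positivity), mul_comm (cex F n : ℝ)]
  exact rpow_three_halves_le_of_choose_two_le hn hF hbound

/-- If `F` has no isolated vertices and is neither complete nor complete multipartite,
then `cex(n,F) = Ω(n^{3/2})`. -/
theorem cex_omega_three_halves {V : Type} [Fintype V] (F : SimpleGraph V)
    (hiso : ∀ v : V, ∃ u : V, F.Adj v u) (hnc : F ≠ ⊤)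
    (hncm : ¬ ∃ (k : ℕ) (a : Fin k → ℕ),
        Nonempty (F ≃g completeMultipartiteGraph fun i : Fin k => Fin (a i))) :
    ∃ c : ℝ, 0 < c ∧ ∃ N : ℕ, ∀ n : ℕ, N ≤ n →
      c * (n : ℝ) ^ (3 / 2 : ℝ) ≤ (cex F n : ℝ) :=
  cex_omega_three_halves_general F hiso hncm
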